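/- arXiv:1509.00126 — 2 statements merged into one kernel-verified Lean document; each statement's English description precedes it below -/
import Mathlib

section
/- Proposition 5(d): Suppose (1−δ)·f_α > c > (1−δ)·(f_α+f_β)/2 and (1+δ(n_α−1))·f_α + (1+δ(n_α+n_β−2))·f_β < 2c, and let g^e be the network whose edges are exactly all pairs of distinct type-α agents (the strongly efficient network of Theorem 2(d)). Then g^e is core-stable. -/
/-!
In the clique on `A` every type-α agent earns `(nα - 1)(fα - c)` and every type-β agent is
isolated and earns `0`, so a blocking coalition `I'` with network `g'` would need a total payoff
in `g'` above `k (nα - 1)(fα - c)`, where `k = |I' ∩ A|`.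

Only the agents linked in `g'` earn anything. For such an agent a direct link to `j` is worth
`(1 - δ) f j - c` on top of `δ f j`, and every other linked agent at most `δ f j`. Summing, every
α–α link is worth `(1 - δ) fα - c > 0`, at most `a (a - 1)` of them exist among the `a` linked
α agents, and together with their indirect benefits they give at most the clique value
`a (a - 1)(fα - c)`. Every linked β agent carries a link, worth at most
`(1 - δ)(fα + fβ) - 2c` once α–β links are charged to their β end, and the hypothesis
`(1 + δ(nα - 1)) fα + (1 + δ(nα + nβ - 2)) fβ < 2c` says precisely that this loss outweighs all
indirect benefits the agent can bring. Hence the coalition gets at most `a (a - 1)(fα - c)`,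
and `a (a - 1) ≤ k (nα - 1)`.
-/

open Finset

noncomputable section

open scoped Classical

variable {I : Type*}

/-- Benefit function of the two-type connections model: a connection to a
type-α agent (a member of `A`) yields `fα`, a connection to a type-β agent
yields `fβ` (before spatial discounting). -/
def fTheta [DecidableEq I] (A : Finset I) (fα fβ : ℝ) (j : I) : ℝ :=
  if j ∈ A then fα else fβ

/-- One-period payoff of agent `i` in network `g`:
`u_i(g) = Σ_{j ≠ i reachable from i} δ^(d_g(i,j)-1) f(θ_j) − deg_g(i)·c`. -/
def payoff [Fintype I] (f : I → ℝ) (c δ : ℝ) (g : SimpleGraph I) (i : I) : ℝ :=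
  (∑ j ∈ univ.filter fun j => j ≠ i ∧ g.Reachable i j, δ ^ (g.dist i j - 1) * f j)
    - ((univ.filter fun j => g.Adj i j).card : ℝ) * c

/-- Total one-period payoff `ν(g) = Σ_i u_i(g)`. -/
def totalPayoff [Fintype I] (f : I → ℝ) (c δ : ℝ) (g : SimpleGraph I) : ℝ :=
  ∑ i, payoff f c δ g i

/-- A network is strongly efficient if it maximizes the total payoff. -/
def StronglyEfficient [Fintype I] (f : I → ℝ) (c δ : ℝ) (g : SimpleGraph I) : Prop :=
  ∀ g' : SimpleGraph I, totalPayoff f c δ g' ≤ totalPayoff f c δ g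

/-- A network `g` is core-stable if no subgroup `I'` of agents, together with a
network `g'` all of whose links are inside `I'`, gives every member of `I'` a
weakly higher payoff and some member a strictly higher payoff. -/
def CoreStable [Fintype I] (f : I → ℝ) (c δ : ℝ) (g : SimpleGraph I) : Prop :=
  ¬ ∃ (I' : Finset I) (g' : SimpleGraph I),
      (∀ i j : I, g'.Adj i j → i ∈ I' ∧ j ∈ I') ∧
      (∀ i ∈ I', payoff f c δ g i ≤ payoff f c δ g' i) ∧
      (∃ i ∈ I', payoff f c δ g i < payoff f c δ g' i)

/-- The network whose links are exactly the pairs with at least one endpoint in `A`. -/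
def withCore (A : Finset I) : SimpleGraph I where
  Adj i j := i ≠ j ∧ (i ∈ A ∨ j ∈ A)
  symm := ⟨fun i j h => ⟨h.1.symm, h.2.symm⟩⟩
  loopless := ⟨fun i h => h.1 rfl⟩

/-- The clique on `A`: exactly all pairs of distinct members of `A` are linked. -/
def cliqueOn (A : Finset I) : SimpleGraph I where
  Adj i j := i ≠ j ∧ i ∈ A ∧ j ∈ A
  symm := ⟨fun i j h => ⟨h.1.symm, h.2.2, h.2.1⟩⟩
  loopless := ⟨fun i h => h.1 rfl⟩

/-- Clique on `A` together with the links `{i₀, j}` for every agent `j ∉ A`. -/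
def coreStar (A : Finset I) (i₀ : I) : SimpleGraph I where
  Adj i j := i ≠ j ∧ ((i ∈ A ∧ j ∈ A) ∨ (i = i₀ ∧ j ∉ A) ∨ (j = i₀ ∧ i ∉ A))
  symm := by
    constructor
    rintro i j ⟨hne, h⟩
    refine ⟨hne.symm, ?_⟩
    rcases h with h | h | h
    · exact Or.inl ⟨h.2, h.1⟩
    · exact Or.inr (Or.inr h)
    · exact Or.inr (Or.inl h)
  loopless := ⟨fun i h => h.1 rfl⟩

/-- The star on all agents centered at `i₀`. -/
def starAll (i₀ : I) : SimpleGraph I where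
  Adj i j := i ≠ j ∧ (i = i₀ ∨ j = i₀)
  symm := ⟨fun i j h => ⟨h.1.symm, h.2.symm⟩⟩
  loopless := ⟨fun i h => h.1 rfl⟩

/-- The star on the agents in `A`, centered at `i₀`. -/
def starOn (A : Finset I) (i₀ : I) : SimpleGraph I where
  Adj i j := i ≠ j ∧ (i = i₀ ∨ j = i₀) ∧ i ∈ A ∧ j ∈ A
  symm := ⟨fun i j h => ⟨h.1.symm, h.2.1.symm, h.2.2.2, h.2.2.1⟩⟩
  loopless := ⟨fun i h => h.1 rfl⟩

open SimpleGraph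

theorem Finset.filter_sdiff {α : Type*} [DecidableEq α] (p : α → Prop) [DecidablePred p]
    (s t : Finset α) : s.filter p \ t = (s \ t).filter p := by
  ext
  simp only [mem_sdiff, mem_filter]
  tauto

section Graph

variable {g : SimpleGraph I}

lemma pow_dist_sub_one_le {δ : ℝ} (hδ0 : 0 ≤ δ) (hδ1 : δ ≤ 1) {i j : I} (hne : i ≠ j)
    (hr : g.Reachable i j) : δ ^ (g.dist i j - 1) ≤ δ + if g.Adj i j then 1 - δ else 0 := by
  by_cases hadj : g.Adj i j
  · simp [dist_eq_one_iff_adj.2 hadj, hadj]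
  · have h1 : g.dist i j ≠ 1 := fun h => hadj (dist_eq_one_iff_adj.1 h)
    have h0 : g.dist i j ≠ 0 := dist_ne_zero_iff_ne_and_reachable.2 ⟨hne, hr⟩
    simpa [hadj] using pow_le_pow_of_le_one hδ0 hδ1 (show 1 ≤ g.dist i j - 1 by omega)

lemma sum_card_filter_adj_le (s : Finset I) :
    ∑ i ∈ s, (#{j ∈ s | g.Adj i j} : ℝ) ≤ #s * (#s - 1) := by
  rw [← nsmul_eq_mul]
  refine sum_le_card_nsmul _ _ _ fun i hi => ?_
  have : {j ∈ s | g.Adj i j} ⊆ s.erase i := fun j hj =>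
    mem_erase.2 ⟨(mem_filter.1 hj).2.ne', (mem_filter.1 hj).1⟩
  rw [le_sub_iff_add_le, ← card_erase_add_one hi]
  exact_mod_cast Nat.add_le_add_right (card_le_card this) 1

lemma sum_card_filter_adj_comm (s t : Finset I) :
    ∑ i ∈ s, #{j ∈ t | g.Adj i j} = ∑ j ∈ t, #{i ∈ s | g.Adj j i} := by
  simpa only [bipartiteAbove, bipartiteBelow, adj_comm] using
    sum_card_bipartiteAbove_eq_sum_card_bipartiteBelow g.Adj (s := s) (t := t)

lemma cliqueOn_adj_of_reachable {A : Finset I} {i j : I} (hne : j ≠ i)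
    (h : (cliqueOn A).Reachable i j) : (cliqueOn A).Adj i j := by
  obtain ⟨k, hik⟩ := (mem_support _).1 (mem_support_of_reachable hne.symm h)
  obtain ⟨l, hjl⟩ := (mem_support _).1 (mem_support_of_reachable hne h.symm)
  exact ⟨hne.symm, hik.2.1, hjl.2.1⟩

end Graph

section Payoff

variable [Fintype I] {f : I → ℝ} {c δ : ℝ} {g : SimpleGraph I}

lemma payoff_eq_zero_of_notMem_support {i : I} (hi : i ∉ g.support) :
    payoff f c δ g i = 0 := by
  have hR : (univ.filter fun j => j ≠ i ∧ g.Reachable i j) = ∅ :=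
    filter_eq_empty_iff.2 fun j _ h => hi (mem_support_of_reachable h.1.symm h.2)
  have hN : (univ.filter fun j => g.Adj i j) = ∅ :=
    filter_eq_empty_iff.2 fun j _ hij => hi ((mem_support g).2 ⟨j, hij⟩)
  rw [payoff, hR, hN]
  simp

lemma payoff_eq_of_reachable_imp_adj {i : I} (h : ∀ j, j ≠ i → g.Reachable i j → g.Adj i j) :
    payoff f c δ g i = ∑ j ∈ univ.filter fun j => g.Adj i j, (f j - c) := by
  have hR : (univ.filter fun j => j ≠ i ∧ g.Reachable i j) = univ.filter fun j => g.Adj i j := by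
    ext j
    simp only [mem_filter, mem_univ, true_and]
    exact ⟨fun ⟨hne, hr⟩ => h j hne hr, fun hij => ⟨hij.ne', hij.reachable⟩⟩
  rw [payoff, hR, sum_sub_distrib, sum_const, nsmul_eq_mul]
  congr 1
  refine sum_congr rfl fun j hj => ?_
  rw [dist_eq_one_iff_adj.2 (mem_filter.1 hj).2]
  simp

lemma payoff_le (hf : 0 ≤ f) (hδ0 : 0 ≤ δ) (hδ1 : δ ≤ 1) (i : I) :
    payoff f c δ g i ≤ ∑ j ∈ {j ∈ g.support.toFinset | g.Adj i j}, ((1 - δ) * f j - c)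
      + δ * ∑ j ∈ g.support.toFinset.erase i, f j := by
  set R : Finset I := univ.filter fun j => j ≠ i ∧ g.Reachable i j
  have hNR : {j ∈ g.support.toFinset | g.Adj i j} = {j ∈ R | g.Adj i j} := by
    ext j
    simp only [R, mem_filter, mem_univ, true_and, Set.mem_toFinset]
    exact ⟨fun ⟨_, h⟩ => ⟨⟨h.ne', h.reachable⟩, h⟩,
      fun ⟨_, h⟩ => ⟨(mem_support g).2 ⟨i, h.symm⟩, h⟩⟩
  have hRV : R ⊆ g.support.toFinset.erase i := fun j hj => by
    simp only [R, mem_filter, mem_univ, true_and] at hj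
    exact mem_erase.2 ⟨hj.1, Set.mem_toFinset.2 (mem_support_of_reachable hj.1 hj.2.symm)⟩
  have hN : (univ.filter fun j => g.Adj i j) = {j ∈ R | g.Adj i j} := by
    rw [← hNR]
    ext j
    simp only [mem_filter, mem_univ, true_and, Set.mem_toFinset, mem_support]
    exact ⟨fun h => ⟨⟨i, h.symm⟩, h⟩, And.right⟩
  calc payoff f c δ g i
      ≤ ∑ j ∈ R, (δ * f j + if g.Adj i j then (1 - δ) * f j else 0)
          - #{j ∈ R | g.Adj i j} * c := by
        rw [payoff, hN]
        gcongr with j hj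
        simp only [mem_filter, mem_univ, true_and] at hj
        calc δ ^ (g.dist i j - 1) * f j ≤ (δ + if g.Adj i j then 1 - δ else 0) * f j :=
              mul_le_mul_of_nonneg_right (pow_dist_sub_one_le hδ0 hδ1 hj.1.symm hj.2) (hf j)
          _ = _ := by split_ifs <;> ring
    _ = ∑ j ∈ {j ∈ R | g.Adj i j}, ((1 - δ) * f j - c) + δ * ∑ j ∈ R, f j := by
        rw [sum_add_distrib, ← sum_filter, sum_sub_distrib, sum_const, nsmul_eq_mul, mul_sum]
        ring
    _ ≤ _ := by
        rw [hNR]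
        exact (add_le_add_iff_left _).2 (mul_le_mul_of_nonneg_left
          (sum_le_sum_of_subset_of_nonneg hRV fun j _ _ => hf j) hδ0)

lemma sum_payoff_support_le (hf : 0 ≤ f) (hδ0 : 0 ≤ δ) (hδ1 : δ ≤ 1) :
    ∑ i ∈ g.support.toFinset, payoff f c δ g i
      ≤ ∑ i ∈ g.support.toFinset, ∑ j ∈ {j ∈ g.support.toFinset | g.Adj i j}, ((1 - δ) * f j - c)
        + δ * (#g.support.toFinset - 1) * ∑ j ∈ g.support.toFinset, f j := by
  refine (sum_le_sum fun i _ => payoff_le hf hδ0 hδ1 i).trans_eq ?_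
  rw [sum_add_distrib, ← mul_sum, sum_congr rfl fun i hi => sum_erase_eq_sub hi, sum_sub_distrib,
    sum_const, nsmul_eq_mul]
  ring

lemma card_filter_adj_support_pos {i : I} (hi : i ∈ g.support) :
    0 < #{j ∈ g.support.toFinset | g.Adj i j} := by
  obtain ⟨j, hij⟩ := (mem_support g).1 hi
  exact card_pos.2 ⟨j, mem_filter.2 ⟨Set.mem_toFinset.2 ((mem_support g).2 ⟨i, hij.symm⟩), hij⟩⟩

end Payoff

/-- `a` and `s` count the linked α and β agents, `m`, `e`, `m₄` the ordered pairs of linked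
agents of types αα, βα and ββ. -/
lemma two_type_bound_arith {fα fβ c δ nα nβ a s m e m₄ : ℝ} (hfα : 0 ≤ fα) (hfβ : 0 ≤ fβ)
    (hδ0 : 0 ≤ δ) (h1 : c ≤ (1 - δ) * fα)
    (h3 : (1 + δ * (nα - 1)) * fα + (1 + δ * (nα + nβ - 2)) * fβ ≤ 2 * c)
    (hnα : 1 ≤ nα) (ha : a ≤ nα) (hsn : s ≤ nβ) (hs0 : 0 ≤ s)
    (hm : m ≤ a * (a - 1)) (hs : s ≤ e + m₄) (hm₄ : 0 ≤ m₄) :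
    (m + e) * ((1 - δ) * fα - c) + (e + m₄) * ((1 - δ) * fβ - c)
      + δ * (a + s - 1) * (a * fα + s * fβ) ≤ a * (a - 1) * (fα - c) := by
  set R := nα * fα + (nα + nβ - 1) * fβ
  have hR : 0 ≤ R := by nlinarith
  have hX : a * fα + (a + s - 1) * fβ ≤ R := by nlinarith
  have hpab : (1 - δ) * fα - c + ((1 - δ) * fβ - c) ≤ -(δ * R) := by linarith
  have hpab0 : (1 - δ) * fα - c + ((1 - δ) * fβ - c) ≤ 0 := by nlinarith
  have hpa : 0 ≤ (1 - δ) * fα - c := by linarith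
  nlinarith [mul_le_mul_of_nonneg_right hm hpa, mul_nonneg hm₄ hpa,
    mul_le_mul_of_nonpos_right hs hpab0, mul_le_mul_of_nonneg_left hX (mul_nonneg hs0 hδ0),
    mul_le_mul_of_nonneg_left hpab hs0]

section TwoTypes

variable [DecidableEq I] {A : Finset I} {fα fβ c δ : ℝ}

lemma sum_comp_fTheta (φ : ℝ → ℝ) (s : Finset I) :
    ∑ j ∈ s, φ (fTheta A fα fβ j) = #(s ∩ A) * φ fα + #(s \ A) * φ fβ := by
  have hα : ∀ j ∈ s ∩ A, φ (fTheta A fα fβ j) = φ fα := fun j hj => by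
    rw [fTheta, if_pos (mem_inter.1 hj).2]
  have hβ : ∀ j ∈ s \ A, φ (fTheta A fα fβ j) = φ fβ := fun j hj => by
    rw [fTheta, if_neg (mem_sdiff.1 hj).2]
  rw [← sum_inter_add_sum_sdiff s A, sum_congr rfl hα, sum_congr rfl hβ]
  simp only [sum_const, nsmul_eq_mul]

lemma sum_filter_adj_comp_fTheta (φ : ℝ → ℝ) (g : SimpleGraph I) (V : Finset I) (i : I) :
    ∑ j ∈ {j ∈ V | g.Adj i j}, φ (fTheta A fα fβ j)
      = #{j ∈ V ∩ A | g.Adj i j} * φ fα + #{j ∈ V \ A | g.Adj i j} * φ fβ := by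
  rw [sum_comp_fTheta, filter_inter, filter_sdiff]

variable [Fintype I]

lemma payoff_cliqueOn_of_mem {i : I} (hi : i ∈ A) :
    payoff (fTheta A fα fβ) c δ (cliqueOn A) i = (#A - 1) * (fα - c) := by
  have hN : (univ.filter fun j => (cliqueOn A).Adj i j) = A.erase i := by
    ext j
    simp only [mem_filter, mem_univ, true_and, mem_erase]
    exact ⟨fun h => ⟨h.1.symm, h.2.2⟩, fun h => ⟨h.1.symm, hi, h.2⟩⟩
  have hα : ∀ j ∈ A.erase i, fTheta A fα fβ j - c = fα - c := fun j hj => by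
    rw [fTheta, if_pos (mem_of_mem_erase hj)]
  rw [payoff_eq_of_reachable_imp_adj fun j => cliqueOn_adj_of_reachable, hN, sum_congr rfl hα,
    sum_const, card_erase_of_mem hi, nsmul_eq_mul, Nat.cast_sub (card_pos.2 ⟨i, hi⟩), Nat.cast_one]

lemma sum_payoff_cliqueOn (s : Finset I) :
    ∑ i ∈ s, payoff (fTheta A fα fβ) c δ (cliqueOn A) i = #(s ∩ A) * ((#A - 1) * (fα - c)) := by
  rw [← sum_inter_add_sum_sdiff s A,
    sum_congr rfl fun i hi => payoff_cliqueOn_of_mem (mem_inter.1 hi).2,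
    sum_congr rfl fun i hi => payoff_eq_zero_of_notMem_support fun ⟨j, hij⟩ =>
      (mem_sdiff.1 hi).2 hij.2.1]
  simp

theorem sum_payoff_support_fTheta_le (g : SimpleGraph I) (hA : 1 ≤ #A) (hfα : 0 ≤ fα)
    (hfβ : 0 ≤ fβ) (hδ0 : 0 ≤ δ) (hδ1 : δ ≤ 1) (h1 : c ≤ (1 - δ) * fα)
    (h3 : (1 + δ * ((#A : ℝ) - 1)) * fα + (1 + δ * ((#A : ℝ) + #Aᶜ - 2)) * fβ ≤ 2 * c) :
    ∑ i ∈ g.support.toFinset, payoff (fTheta A fα fβ) c δ g i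
      ≤ #(g.support.toFinset ∩ A) * (#(g.support.toFinset ∩ A) - 1) * (fα - c) := by
  set V := g.support.toFinset
  set dα : I → ℝ := fun i => #{j ∈ V ∩ A | g.Adj i j}
  set dβ : I → ℝ := fun i => #{j ∈ V \ A | g.Adj i j}
  have hf : 0 ≤ fTheta A fα fβ := fun j => by unfold fTheta; split_ifs <;> assumption
  have hαβ : ∑ i ∈ V ∩ A, dβ i = ∑ i ∈ V \ A, dα i := by
    simp only [dα, dβ]
    exact_mod_cast sum_card_filter_adj_comm (g := g) (V ∩ A) (V \ A)
  have hβ : (#(V \ A) : ℝ) ≤ ∑ i ∈ V \ A, dα i + ∑ i ∈ V \ A, dβ i := by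
    rw [← sum_add_distrib, ← mul_one (#(V \ A) : ℝ), ← nsmul_eq_mul]
    refine card_nsmul_le_sum _ _ _ fun i hi => ?_
    have hpos := card_filter_adj_support_pos (Set.mem_toFinset.1 (mem_sdiff.1 hi).1)
    rw [← card_inter_add_card_sdiff _ A, filter_inter, filter_sdiff] at hpos
    simp only [dα, dβ]
    exact_mod_cast hpos
  have hV : (#V : ℝ) = #(V ∩ A) + #(V \ A) := by
    exact_mod_cast (card_inter_add_card_sdiff V A).symm
  have hF : ∑ j ∈ V, fTheta A fα fβ j = _ := sum_comp_fTheta id V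
  calc ∑ i ∈ V, payoff (fTheta A fα fβ) c δ g i
      ≤ _ := sum_payoff_support_le hf hδ0 hδ1
    _ = (∑ i ∈ V ∩ A, dα i + ∑ i ∈ V \ A, dα i) * ((1 - δ) * fα - c)
          + (∑ i ∈ V ∩ A, dβ i + ∑ i ∈ V \ A, dβ i) * ((1 - δ) * fβ - c)
          + δ * (#(V ∩ A) + #(V \ A) - 1) * (#(V ∩ A) * fα + #(V \ A) * fβ) := by
      rw [sum_congr rfl fun i _ => sum_filter_adj_comp_fTheta (fun x => (1 - δ) * x - c) g V i,
        ← sum_inter_add_sum_sdiff V A, hF, hV]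
      simp only [sum_add_distrib, ← sum_mul, id]
      ring
    _ ≤ _ := by
      rw [hαβ]
      exact two_type_bound_arith hfα hfβ hδ0 h1 h3 (by exact_mod_cast hA)
        (by exact_mod_cast card_le_card inter_subset_right)
        (by exact_mod_cast card_le_card fun j hj => mem_compl.2 (mem_sdiff.1 hj).2)
        (Nat.cast_nonneg _) (sum_card_filter_adj_le (V ∩ A)) hβ
        (sum_nonneg fun i _ => Nat.cast_nonneg _)

end TwoTypes

theorem prop5d_general {I : Type*} [Fintype I] [DecidableEq I]
    (A : Finset I) (fα fβ c δ : ℝ)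
    (hA : 1 ≤ A.card)
    (hfαβ : fβ < fα) (hfβ : 0 < fβ)
    (hδ0 : 0 < δ) (hδ1 : δ < 1)
    (h1 : (1 - δ) * fα > c)
    (h3 : (1 + δ * ((A.card : ℝ) - 1)) * fα + (1 + δ * ((A.card : ℝ) + (Aᶜ.card : ℝ) - 2)) * fβ < 2 * c) :
    CoreStable (fTheta A fα fβ) c δ (cliqueOn A) := by
  rintro ⟨I', g', hg'I', hweak, i₀, hi₀, hstrict⟩
  set V := g'.support.toFinset
  have hVI' : V ⊆ I' := fun i hi => by
    obtain ⟨j, hij⟩ := (mem_support g').1 (Set.mem_toFinset.1 hi)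
    exact (hg'I' i j hij).1
  have hblock := sum_lt_sum hweak ⟨i₀, hi₀, hstrict⟩
  rw [sum_payoff_cliqueOn, ← sum_subset hVI' fun i _ hi =>
    payoff_eq_zero_of_notMem_support fun h => hi (Set.mem_toFinset.2 h)] at hblock
  have hbound := sum_payoff_support_fTheta_le g' hA (hfβ.trans hfαβ).le hfβ.le hδ0.le hδ1.le
    h1.le h3.le
  have hVA : (#(V ∩ A) : ℝ) ≤ #(I' ∩ A) := by
    exact_mod_cast card_le_card (inter_subset_inter_right hVI')
  have hI'A : (#(I' ∩ A) : ℝ) ≤ #A := by exact_mod_cast card_le_card inter_subset_right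
  have hA' : (1 : ℝ) ≤ #A := by exact_mod_cast hA
  have hcount : (#(V ∩ A) : ℝ) * (#(V ∩ A) - 1) ≤ #(I' ∩ A) * (#A - 1) := by
    nlinarith [mul_nonneg (sub_nonneg.2 hVA) (sub_nonneg.2 hA'),
      mul_nonneg (Nat.cast_nonneg (α := ℝ) #(V ∩ A)) (sub_nonneg.2 (hVA.trans hI'A))]
  have hfc : 0 < fα - c := by nlinarith
  nlinarith [mul_le_mul_of_nonneg_right hcount hfc.le]

/-- Proposition 5(d): under the conditions of Theorem 2(d), the strongly
efficient network (the clique on the type-α agents) is core-stable. -/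
theorem prop5d {I : Type*} [Fintype I] [DecidableEq I]
    (A : Finset I) (fα fβ c δ : ℝ)
    (hA : 1 ≤ A.card) (hB : 1 ≤ Aᶜ.card)
    (hfαβ : fβ < fα) (hfβ : 0 < fβ) (hc : 0 < c)
    (hδ0 : 0 < δ) (hδ1 : δ < 1)
    (h1 : (1 - δ) * fα > c) (h2 : c > (1 - δ) * ((fα + fβ) / 2))
    (h3 : (1 + δ * ((A.card : ℝ) - 1)) * fα + (1 + δ * ((A.card : ℝ) + (Aᶜ.card : ℝ) - 2)) * fβ < 2 * c) :
    CoreStable (fTheta A fα fβ) c δ (cliqueOn A) :=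
  prop5d_general A fα fβ c δ hA hfαβ hfβ hδ0 hδ1 h1 h3
end
end

section
/- Proposition 5(e): Suppose (1−δ)·f_α < c, f_α + f_β + δ[(n_β−1)·f_β + (n_α−1)·(f_α+f_β)] > 2c, and 2(n_α−1)·f_α + n_β·(f_α+f_β) + δ[(n_α−1)(n_α−2)·f_α + n_β(n_β−1)·f_β + n_β(n_α−1)·(f_α+f_β)] − 2(n_α+n_β−1)·c > 0, and let g^e be the star on all agents centered at a fixed type-α agent i₀ ∈ A, i.e. with edge set {{i₀, j} : j ∈ I, j ≠ i₀} (the strongly efficient network of Theorem 2(e)). Then g^e is core-stable if and only if u_{i₀}(g^e) ≥ 0. -/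
/-!
Let `j` be a spoke and `g` any network in which `j` has a neighbour `a`. A direct link to `k` is
worth `f k - c < δ f k`, and any other agent is worth at most `δ f k` to `j`, so `j` gets at most
its payoff in the star centred at `a`, hence at most its payoff in the star centred at the
type-α agent `i₀`; equality forces `a` to be `j`'s only neighbour and to be linked to everybody
else. Spokes also prefer the star to isolation, so in a blocking coalition only `i₀` can gain
strictly. Then `i₀` has a neighbour, a weakly gaining spoke, which forces `i₀` to be linked to
everybody, and then every spoke to be linked to `i₀` only: the deviation is the star itself.
Conversely, if `u_{i₀} < 0` then `i₀` blocks on its own.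
-/

open Finset

noncomputable section

open scoped Classical

variable {I : Type*}

namespace SimpleGraph

variable {V : Type*} {G : SimpleGraph V} {u v : V}

lemma dist_eq_two_iff :
    G.dist u v = 2 ↔ u ≠ v ∧ ¬ G.Adj u v ∧ (G.commonNeighbors u v).Nonempty := by
  rw [← edist_eq_two_iff, dist, ENat.toNat_eq_iff two_ne_zero, Nat.cast_ofNat]

end SimpleGraph

open SimpleGraph

/-- The reachability test matters: `SimpleGraph.dist` is `0` between unreachable agents. -/
def contribution [Fintype I] (f : I → ℝ) (c δ : ℝ) (g : SimpleGraph I) (i j : I) : ℝ :=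
  (if g.Reachable i j then δ ^ (g.dist i j - 1) * f j else 0) - if g.Adj i j then c else 0

section Payoff

variable [Fintype I] {f : I → ℝ} {c δ : ℝ} {g : SimpleGraph I} {i j k a : I}

lemma payoff_eq_sum_contribution (f : I → ℝ) (c δ : ℝ) (g : SimpleGraph I) (i : I) :
    payoff f c δ g i = ∑ j ∈ univ.erase i, contribution f c δ g i j := by
  have hadj : (univ.filter fun j => g.Adj i j) = (univ.erase i).filter fun j => g.Adj i j := by
    ext j
    simp only [mem_filter, mem_univ, mem_erase, and_true, true_and]
    exact ⟨fun h => ⟨h.ne', h⟩, And.right⟩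
  simp only [payoff, contribution, sum_sub_distrib, ← sum_filter, hadj, card_eq_sum_ones,
    Nat.cast_sum, Nat.cast_one, sum_mul, one_mul]
  congr 2
  ext j
  simp [and_comm]

lemma payoff_eq_zero_of_forall_not_adj (h : ∀ j, ¬ g.Adj i j) : payoff f c δ g i = 0 := by
  rw [payoff_eq_sum_contribution]
  refine sum_eq_zero fun j hj => ?_
  have hij : ¬ g.Reachable i j := by
    rintro ⟨p⟩
    cases p with
    | nil => exact ne_of_mem_erase hj rfl
    | cons hadj _ => exact h _ hadj
  simp [contribution, hij, h j]

lemma contribution_of_adj (h : g.Adj i j) : contribution f c δ g i j = f j - c := by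
  simp [contribution, h.reachable, dist_eq_one_iff_adj.mpr h, h]

lemma contribution_le (hj : j ≠ i) (hf : 0 ≤ f j) (hδ0 : 0 ≤ δ) (hδ1 : δ ≤ 1)
    (hcost : (1 - δ) * f j ≤ c) : contribution f c δ g i j ≤ δ * f j := by
  by_cases hadj : g.Adj i j
  · rw [contribution_of_adj hadj]
    linarith
  by_cases hr : g.Reachable i j
  · have hd := hr.one_lt_dist_of_ne_of_not_adj hj.symm hadj
    simp only [contribution, hr, hadj, if_true, if_false, sub_zero]
    have hpow : δ ^ (g.dist i j - 1) ≤ δ := by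
      simpa using pow_le_pow_of_le_one hδ0 hδ1 (show 1 ≤ g.dist i j - 1 by omega)
    exact mul_le_mul_of_nonneg_right hpow hf
  · simp only [contribution, hr, hadj, if_false, sub_zero]
    positivity

lemma contribution_lt_of_dist_ne_two (hj : j ≠ i) (hf : 0 < f j) (hδ0 : 0 < δ) (hδ1 : δ < 1)
    (hcost : (1 - δ) * f j < c) (hd : g.dist i j ≠ 2) : contribution f c δ g i j < δ * f j := by
  by_cases hadj : g.Adj i j
  · rw [contribution_of_adj hadj]
    linarith
  by_cases hr : g.Reachable i j
  · have hd1 := hr.one_lt_dist_of_ne_of_not_adj hj.symm hadj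
    simp only [contribution, hr, hadj, if_true, if_false, sub_zero]
    have hpow : δ ^ (g.dist i j - 1) < δ := by
      simpa using pow_lt_pow_right_of_lt_one₀ hδ0 hδ1 (show 1 < g.dist i j - 1 by omega)
    exact mul_lt_mul_of_pos_right hpow hf
  · simp only [contribution, hr, hadj, if_false, sub_zero]
    positivity

lemma contribution_starAll (hj : j ≠ a) (hk : k ≠ j) :
    contribution f c δ (starAll a) j k = if k = a then f a - c else δ * f k := by
  split_ifs with hka
  · subst hka
    exact contribution_of_adj ⟨hj, Or.inr rfl⟩
  · have hd : (starAll a).dist j k = 2 :=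
      dist_eq_two_iff.mpr ⟨hk.symm, fun h => h.2.elim hj hka,
        a, (mem_commonNeighbors _).mpr ⟨⟨hj, Or.inr rfl⟩, ⟨hka, Or.inr rfl⟩⟩⟩
    have hadj : ¬ (starAll a).Adj j k := fun h => h.2.elim hj hka
    simp [contribution, Reachable.of_dist_ne_zero (hd ▸ two_ne_zero), hd, hadj]

lemma payoff_starAll (hj : j ≠ a) :
    payoff f c δ (starAll a) j = (1 - δ) * f a + δ * (∑ k, f k - f j) - c := by
  have ha : a ∈ univ.erase j := mem_erase.mpr ⟨hj.symm, mem_univ a⟩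
  rw [payoff_eq_sum_contribution, ← sum_erase_eq_sub (mem_univ j), ← add_sum_erase _ _ ha,
    ← add_sum_erase _ f ha,
    contribution_starAll hj hj.symm, if_pos rfl, sum_congr rfl fun k hk => by
      rw [contribution_starAll hj (ne_of_mem_erase (mem_of_mem_erase hk)),
        if_neg (ne_of_mem_erase hk)], ← mul_sum]
  ring

lemma payoff_starAll_sub_payoff (hja : g.Adj j a) :
    payoff f c δ (starAll a) j - payoff f c δ g j =
      ∑ k ∈ (univ.erase j).erase a, (δ * f k - contribution f c δ g j k) := by
  have ha : a ∈ univ.erase j := mem_erase.mpr ⟨hja.ne', mem_univ a⟩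
  rw [payoff_eq_sum_contribution, payoff_eq_sum_contribution, ← add_sum_erase _ _ ha,
    ← add_sum_erase _ _ ha, contribution_starAll hja.ne hja.ne', if_pos rfl,
    contribution_of_adj hja, sum_congr rfl fun k hk => by
      rw [contribution_starAll hja.ne (ne_of_mem_erase (mem_of_mem_erase hk)),
        if_neg (ne_of_mem_erase hk)], sum_sub_distrib]
  ring

lemma payoff_starAll_le_payoff_starAll {b : I} (hδ1 : δ ≤ 1) (hja : j ≠ a) (hjb : j ≠ b)
    (hab : f a ≤ f b) : payoff f c δ (starAll a) j ≤ payoff f c δ (starAll b) j := by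
  rw [payoff_starAll hja, payoff_starAll hjb]
  gcongr

lemma payoff_le_payoff_starAll (hf : ∀ k, 0 ≤ f k) (hδ0 : 0 ≤ δ) (hδ1 : δ ≤ 1)
    (hcost : ∀ k, (1 - δ) * f k ≤ c) (hja : g.Adj j a) :
    payoff f c δ g j ≤ payoff f c δ (starAll a) j := by
  rw [← sub_nonneg, payoff_starAll_sub_payoff hja]
  refine sum_nonneg fun k hk => sub_nonneg.mpr ?_
  exact contribution_le (ne_of_mem_erase (mem_of_mem_erase hk)) (hf k) hδ0 hδ1 (hcost k)

lemma eq_and_adj_of_payoff_starAll_le (hf : ∀ k, 0 < f k) (hδ0 : 0 < δ) (hδ1 : δ < 1)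
    (hcost : ∀ k, (1 - δ) * f k < c) (hja : g.Adj j a)
    (h : payoff f c δ (starAll a) j ≤ payoff f c δ g j) :
    (∀ b, g.Adj j b → b = a) ∧ ∀ k, k ≠ j → k ≠ a → g.Adj a k := by
  have hdist : ∀ k, k ≠ j → k ≠ a → g.dist j k = 2 := by
    have hnonneg : ∀ k ∈ (univ.erase j).erase a, 0 ≤ δ * f k - contribution f c δ g j k :=
      fun k hk => sub_nonneg.mpr <| contribution_le (ne_of_mem_erase (mem_of_mem_erase hk))
        (hf k).le hδ0.le hδ1.le (hcost k).le
    have hterm : ∀ k ∈ (univ.erase j).erase a, δ * f k - contribution f c δ g j k = 0 := by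
      refine (sum_eq_zero_iff_of_nonneg hnonneg).mp (le_antisymm ?_ (sum_nonneg hnonneg))
      rw [← payoff_starAll_sub_payoff hja]
      linarith
    intro k hkj hka
    by_contra hd
    have hk : k ∈ (univ.erase j).erase a := mem_erase.mpr ⟨hka, mem_erase.mpr ⟨hkj, mem_univ k⟩⟩
    linarith [hterm k hk, contribution_lt_of_dist_ne_two hkj (hf k) hδ0 hδ1 (hcost k) hd]
  have hunique : ∀ b, g.Adj j b → b = a := fun b hjb => by
    by_contra hba
    exact (dist_eq_two_iff.mp (hdist b hjb.ne' hba)).2.1 hjb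
  refine ⟨hunique, fun k hkj hka => ?_⟩
  obtain ⟨m, hm⟩ := (dist_eq_two_iff.mp (hdist k hkj hka)).2.2
  obtain ⟨hjm, hkm⟩ := (mem_commonNeighbors _).mp hm
  exact hunique m hjm ▸ hkm.symm

end Payoff

section CoreStability

variable [Fintype I] {f : I → ℝ} {c δ : ℝ} {g : SimpleGraph I}

lemma CoreStable.payoff_nonneg (h : CoreStable f c δ g) (i : I) : 0 ≤ payoff f c δ g i := by
  have hbot : payoff f c δ ⊥ i = 0 := payoff_eq_zero_of_forall_not_adj fun _ h => h
  by_contra! hneg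
  refine h ⟨{i}, ⊥, fun _ _ h => h.elim, fun k hk => ?_, i, mem_singleton_self i, ?_⟩
  · rw [mem_singleton.mp hk, hbot]
    exact hneg.le
  · rwa [hbot]

lemma payoff_le_payoff_starAll_of_ne {i₀ j : I} (hf : ∀ k, 0 ≤ f k) (hmax : ∀ k, f k ≤ f i₀)
    (hδ0 : 0 ≤ δ) (hδ1 : δ ≤ 1) (hcost : ∀ k, (1 - δ) * f k ≤ c) (hj : j ≠ i₀)
    (hspoke : 0 ≤ payoff f c δ (starAll i₀) j) :
    payoff f c δ g j ≤ payoff f c δ (starAll i₀) j := by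
  by_cases hnbr : ∃ a, g.Adj j a
  · obtain ⟨a, hja⟩ := hnbr
    exact (payoff_le_payoff_starAll hf hδ0 hδ1 hcost hja).trans
      (payoff_starAll_le_payoff_starAll hδ1 hja.ne hj (hmax a))
  · rwa [payoff_eq_zero_of_forall_not_adj (not_exists.mp hnbr)]

theorem coreStable_starAll {i₀ : I} (hf : ∀ k, 0 < f k) (hmax : ∀ k, f k ≤ f i₀)
    (hδ0 : 0 < δ) (hδ1 : δ < 1) (hcost : ∀ k, (1 - δ) * f k < c)
    (hspoke : ∀ j, j ≠ i₀ → 0 < payoff f c δ (starAll i₀) j)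
    (hcenter : 0 ≤ payoff f c δ (starAll i₀) i₀) : CoreStable f c δ (starAll i₀) := by
  rintro ⟨I', g, hg, hweak, i, hi, hstrict⟩
  have hle : ∀ j, j ≠ i₀ → payoff f c δ g j ≤ payoff f c δ (starAll i₀) j := fun j hj =>
    payoff_le_payoff_starAll_of_ne (fun k => (hf k).le) hmax hδ0.le hδ1.le
      (fun k => (hcost k).le) hj (hspoke j hj).le
  have hrigid : ∀ j ∈ I', ∀ a, j ≠ i₀ → g.Adj j a →
      (∀ b, g.Adj j b → b = a) ∧ ∀ k, k ≠ j → k ≠ a → g.Adj a k := fun j hj a hj₀ hja =>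
    eq_and_adj_of_payoff_starAll_le hf hδ0 hδ1 hcost hja
      ((payoff_starAll_le_payoff_starAll hδ1.le hja.ne hj₀ (hmax a)).trans (hweak j hj))
  obtain rfl : i = i₀ := by
    by_contra hi₀
    exact (hle i hi₀).not_gt hstrict
  obtain ⟨a, hia⟩ : ∃ a, g.Adj i a := by
    by_contra! hiso
    rw [payoff_eq_zero_of_forall_not_adj hiso] at hstrict
    exact hcenter.not_gt hstrict
  have hcenter_adj : ∀ k, k ≠ i → g.Adj i k := fun k hki => by
    by_cases hka : k = a
    · exact hka ▸ hia
    · exact (hrigid a (hg i a hia).2 i hia.ne' hia.symm).2 k hka hki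
  have hg_eq : g = starAll i := by
    ext j k
    refine ⟨fun hjk => ⟨hjk.ne, ?_⟩, ?_⟩
    · by_cases hji : j = i
      · exact Or.inl hji
      · exact Or.inr ((hrigid j (hg i j (hcenter_adj j hji)).2 i hji
          (hcenter_adj j hji).symm).1 k hjk)
    · rintro ⟨hjk, rfl | rfl⟩
      · exact hcenter_adj k hjk.symm
      · exact (hcenter_adj j hjk).symm
  exact hstrict.ne (by rw [hg_eq])

end CoreStability

section TwoTypes

variable [Fintype I] [DecidableEq I] {A : Finset I} {fα fβ c δ : ℝ}

lemma sum_fTheta (A : Finset I) (fα fβ : ℝ) :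
    ∑ k, fTheta A fα fβ k = A.card * fα + Aᶜ.card * fβ := by
  have hα : ∑ k ∈ A, fTheta A fα fβ k = ∑ k ∈ A, fα := sum_congr rfl fun k hk => if_pos hk
  have hβ : ∑ k ∈ Aᶜ, fTheta A fα fβ k = ∑ k ∈ Aᶜ, fβ :=
    sum_congr rfl fun k hk => if_neg (mem_compl.mp hk)
  rw [← sum_add_sum_compl A, hα, hβ, sum_const, sum_const, nsmul_eq_mul, nsmul_eq_mul]

lemma payoff_starAll_fTheta_pos (hB : 1 ≤ Aᶜ.card) (hfαβ : fβ < fα) (hfβ : 0 < fβ)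
    (hδ0 : 0 < δ) (hδ1 : δ < 1)
    (h2 : fα + fβ + δ * (((Aᶜ.card : ℝ) - 1) * fβ + ((A.card : ℝ) - 1) * (fα + fβ)) > 2 * c)
    {i₀ j : I} (hi₀ : i₀ ∈ A) (hj : j ≠ i₀) :
    0 < payoff (fTheta A fα fβ) c δ (starAll i₀) j := by
  rw [payoff_starAll hj, sum_fTheta, fTheta, if_pos hi₀]
  have hnα : (1 : ℝ) ≤ A.card := by exact_mod_cast card_pos.mpr ⟨i₀, hi₀⟩
  have hnβ : (1 : ℝ) ≤ Aᶜ.card := by exact_mod_cast hB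
  by_cases hjA : j ∈ A
  · have hnα' : (2 : ℝ) ≤ A.card := by exact_mod_cast one_lt_card.mpr ⟨i₀, hi₀, j, hjA, hj.symm⟩
    rw [fTheta, if_pos hjA]
    nlinarith [mul_nonneg (mul_nonneg hδ0.le (sub_nonneg.mpr hnα')) (sub_nonneg.mpr hfαβ.le),
      mul_nonneg (mul_nonneg hδ0.le (sub_nonneg.mpr hnβ)) hfβ.le,
      mul_pos (sub_pos.mpr hδ1) (sub_pos.mpr hfαβ)]
  · rw [fTheta, if_neg hjA]
    nlinarith [mul_nonneg (mul_nonneg hδ0.le (sub_nonneg.mpr hnα)) (sub_nonneg.mpr hfαβ.le),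
      mul_nonneg (mul_nonneg hδ0.le (sub_nonneg.mpr hnβ)) hfβ.le]

end TwoTypes

theorem prop5e_general {I : Type*} [Fintype I] [DecidableEq I]
    (A : Finset I) (fα fβ c δ : ℝ)
    (hB : 1 ≤ Aᶜ.card)
    (hfαβ : fβ < fα) (hfβ : 0 < fβ)
    (hδ0 : 0 < δ) (hδ1 : δ < 1)
    (h1 : (1 - δ) * fα < c)
    (h2 : fα + fβ + δ * (((Aᶜ.card : ℝ) - 1) * fβ + ((A.card : ℝ) - 1) * (fα + fβ)) > 2 * c)
    (i₀ : I) (hi₀ : i₀ ∈ A) :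
    CoreStable (fTheta A fα fβ) c δ (starAll i₀) ↔
      payoff (fTheta A fα fβ) c δ (starAll i₀) i₀ ≥ 0 := by
  have hfi₀ : fTheta A fα fβ i₀ = fα := if_pos hi₀
  have hf : ∀ k, 0 < fTheta A fα fβ k := fun k => by
    unfold fTheta
    split_ifs <;> linarith
  have hmax : ∀ k, fTheta A fα fβ k ≤ fTheta A fα fβ i₀ := fun k => by
    rw [hfi₀]
    unfold fTheta
    split_ifs <;> linarith
  have hcost : ∀ k, (1 - δ) * fTheta A fα fβ k < c := fun k =>
    (mul_le_mul_of_nonneg_left (hmax k) (sub_nonneg.mpr hδ1.le)).trans_lt (by rwa [hfi₀])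
  exact ⟨fun h => h.payoff_nonneg i₀, coreStable_starAll hf hmax hδ0 hδ1 hcost
    fun j hj => payoff_starAll_fTheta_pos hB hfαβ hfβ hδ0 hδ1 h2 hi₀ hj⟩

/-- Proposition 5(e): under the conditions of Theorem 2(e), the star on all
agents with type-α center `i₀` is core-stable iff `i₀` gets a non-negative payoff. -/
theorem prop5e {I : Type*} [Fintype I] [DecidableEq I]
    (A : Finset I) (fα fβ c δ : ℝ)
    (hA : 1 ≤ A.card) (hB : 1 ≤ Aᶜ.card)
    (hfαβ : fβ < fα) (hfβ : 0 < fβ) (hc : 0 < c)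
    (hδ0 : 0 < δ) (hδ1 : δ < 1)
    (h1 : (1 - δ) * fα < c)
    (h2 : fα + fβ + δ * (((Aᶜ.card : ℝ) - 1) * fβ + ((A.card : ℝ) - 1) * (fα + fβ)) > 2 * c)
    (h3 : 2 * ((A.card : ℝ) - 1) * fα + (Aᶜ.card : ℝ) * (fα + fβ) + δ * (((A.card : ℝ) - 1) * ((A.card : ℝ) - 2) * fα + (Aᶜ.card : ℝ) * ((Aᶜ.card : ℝ) - 1) * fβ + (Aᶜ.card : ℝ) * ((A.card : ℝ) - 1) * (fα + fβ)) - 2 * ((A.card : ℝ) + (Aᶜ.card : ℝ) - 1) * c > 0)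
    (i₀ : I) (hi₀ : i₀ ∈ A) :
    CoreStable (fTheta A fα fβ) c δ (starAll i₀) ↔
      payoff (fTheta A fα fβ) c δ (starAll i₀) i₀ ≥ 0 :=
  prop5e_general A fα fβ c δ hB hfαβ hfβ hδ0 hδ1 h1 h2 i₀ hi₀
end
end
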